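/- arXiv:2510.22151 — 2 statements merged into one kernel-verified Lean document; each statement's English description precedes it below -/
import Mathlib

section
/- If (Ω, 𝒜, μ) is a finite measure space, {𝒜ₙ} a sequence of σ-subalgebras of 𝒜, and 𝒜_μ := {A ∈ 𝒜 : ∃ Aₙ ∈ 𝒜ₙ with μ(Aₙ Δ A) → 0}, then 𝒜_μ is a σ-subalgebra of 𝒜. -/
/-! Write `d_n(A) = inf {μ (B ∆ A) : B ∈ 𝒜ₙ}` for the distance from `A` to `𝒜ₙ` in the
pseudometric `μ (· ∆ ·)`; `A` is approximable iff `d_n(A) → 0`. Each `d_n` is 1-Lipschitz, so a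
limit of approximable sets is approximable. Complements and finite unions of approximable sets are
approximable by taking complements and unions of the approximants, and, `μ` being finite, the
partial unions of a sequence of measurable sets converge to its union in this pseudometric. -/

open MeasureTheory Filter Topology
open scoped ENNReal symmDiff

namespace MeasureTheory

variable {Ω : Type*} {m0 : MeasurableSpace Ω} (μ : Measure Ω)

noncomputable def approxError (m : MeasurableSpace Ω) (A : Set Ω) : ℝ≥0∞ :=
  ⨅ (B : Set Ω) (_ : MeasurableSet[m] B), μ (B ∆ A)

def ApproximableBy (𝒜 : ℕ → MeasurableSpace Ω) (A : Set Ω) : Prop :=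
  ∃ As : ℕ → Set Ω, (∀ n, MeasurableSet[𝒜 n] (As n)) ∧
    Tendsto (fun n => μ (As n ∆ A)) atTop (𝓝 0)

variable {μ} {𝒜 : ℕ → MeasurableSpace Ω} {A B : Set Ω}

section approxError

variable {m : MeasurableSpace Ω}

lemma approxError_le (hB : MeasurableSet[m] B) : approxError μ m A ≤ μ (B ∆ A) :=
  iInf₂_le B hB

lemma approxError_le_add (A B : Set Ω) :
    approxError μ m A ≤ approxError μ m B + μ (B ∆ A) := by
  simp only [approxError, ENNReal.iInf_add]
  exact le_iInf₂ fun C hC => (approxError_le hC).trans (measure_symmDiff_le C B A)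

lemma exists_measurableSet_lt_of_approxError_lt {r : ℝ≥0∞} (h : approxError μ m A < r) :
    ∃ B, MeasurableSet[m] B ∧ μ (B ∆ A) < r := by
  simpa only [approxError, iInf_lt_iff, exists_prop] using h

lemma approxError_lt_top [IsFiniteMeasure μ] : approxError μ m A < ∞ :=
  (approxError_le (@MeasurableSet.empty _ m)).trans_lt (measure_lt_top μ _)

end approxError

lemma approximableBy_iff_tendsto_approxError [IsFiniteMeasure μ] :
    ApproximableBy μ 𝒜 A ↔ Tendsto (fun n => approxError μ (𝒜 n) A) atTop (𝓝 0) := by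
  refine ⟨fun ⟨As, hAs, hlim⟩ => tendsto_nhds_bot_mono' hlim fun n => approxError_le (hAs n),
    fun hlim => ?_⟩
  have hlt (n : ℕ) : approxError μ (𝒜 n) A < approxError μ (𝒜 n) A + (n : ℝ≥0∞)⁻¹ :=
    ENNReal.lt_add_right approxError_lt_top.ne (ENNReal.inv_ne_zero.2 (ENNReal.natCast_ne_top n))
  choose As hAs hAsA using fun n => exists_measurableSet_lt_of_approxError_lt (hlt n)
  refine ⟨As, hAs, tendsto_nhds_bot_mono' ?_ fun n => (hAsA n).le⟩
  simpa using hlim.add ENNReal.tendsto_inv_nat_nhds_zero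

lemma ApproximableBy.of_tendsto [IsFiniteMeasure μ] {B : ℕ → Set Ω}
    (hB : ∀ k, ApproximableBy μ 𝒜 (B k)) (hBA : Tendsto (fun k => μ (B k ∆ A)) atTop (𝓝 0)) :
    ApproximableBy μ 𝒜 A := by
  rw [approximableBy_iff_tendsto_approxError, ENNReal.tendsto_atTop_zero]
  intro ε hε
  obtain ⟨k, hk⟩ := ENNReal.tendsto_atTop_zero.1 hBA (ε / 2) (ENNReal.half_pos hε.ne')
  obtain ⟨N, hN⟩ := ENNReal.tendsto_atTop_zero.1
    (approximableBy_iff_tendsto_approxError.1 (hB k)) (ε / 2) (ENNReal.half_pos hε.ne')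
  refine ⟨N, fun n hn => ?_⟩
  calc approxError μ (𝒜 n) A ≤ approxError μ (𝒜 n) (B k) + μ (B k ∆ A) :=
        approxError_le_add A (B k)
    _ ≤ ε / 2 + ε / 2 := add_le_add (hN n hn) (hk k le_rfl)
    _ = ε := ENNReal.add_halves ε

lemma approximableBy_empty : ApproximableBy μ 𝒜 ∅ :=
  ⟨fun _ => ∅, fun n => @MeasurableSet.empty _ (𝒜 n), by simp⟩

lemma ApproximableBy.compl (hA : ApproximableBy μ 𝒜 A) : ApproximableBy μ 𝒜 Aᶜ := by
  obtain ⟨As, hAs, hlim⟩ := hA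
  exact ⟨fun n => (As n)ᶜ, fun n => (hAs n).compl, by simpa only [compl_symmDiff_compl]⟩

lemma ApproximableBy.union (hA : ApproximableBy μ 𝒜 A) (hB : ApproximableBy μ 𝒜 B) :
    ApproximableBy μ 𝒜 (A ∪ B) := by
  obtain ⟨As, hAs, hAlim⟩ := hA
  obtain ⟨Bs, hBs, hBlim⟩ := hB
  refine ⟨fun n => As n ∪ Bs n, fun n => (hAs n).union (hBs n),
    tendsto_nhds_bot_mono' (by simpa using hAlim.add hBlim) fun n => ?_⟩
  exact (measure_mono (Set.union_symmDiff_union_subset ..)).trans (measure_union_le _ _)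

lemma ApproximableBy.accumulate {f : ℕ → Set Ω} (hf : ∀ i, ApproximableBy μ 𝒜 (f i)) (n : ℕ) :
    ApproximableBy μ 𝒜 (Set.accumulate f n) := by
  induction n with
  | zero => simpa using hf 0
  | succ n ih => simpa using ih.union (hf (n + 1))

lemma tendsto_measure_accumulate_symmDiff_iUnion [IsFiniteMeasure μ] {f : ℕ → Set Ω}
    (hf : ∀ i, MeasurableSet (f i)) :
    Tendsto (fun n => μ (Set.accumulate f n ∆ ⋃ i, f i)) atTop (𝓝 0) := by
  have hdiff (n : ℕ) :
      μ (Set.accumulate f n ∆ ⋃ i, f i) = μ (⋃ i, f i) - μ (Set.accumulate f n) := by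
    have hsub : Set.accumulate f n ⊆ ⋃ i, f i :=
      Set.iUnion_accumulate (s := f) ▸ Set.subset_iUnion _ n
    rw [symmDiff_of_le hsub, measure_sdiff hsub
      (MeasurableSet.biUnion (Set.to_countable _) fun i _ => hf i).nullMeasurableSet
      (measure_ne_top μ _)]
  simpa [hdiff] using ENNReal.Tendsto.sub (tendsto_const_nhds (x := μ (⋃ i, f i)))
    (tendsto_measure_iUnion_accumulate (μ := μ) (f := f)) (.inl (measure_ne_top μ _))

lemma ApproximableBy.iUnion [IsFiniteMeasure μ] {f : ℕ → Set Ω}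
    (hfm : ∀ i, MeasurableSet (f i)) (hf : ∀ i, ApproximableBy μ 𝒜 (f i)) :
    ApproximableBy μ 𝒜 (⋃ i, f i) :=
  .of_tendsto (ApproximableBy.accumulate hf) (tendsto_measure_accumulate_symmDiff_iUnion hfm)

end MeasureTheory

theorem stmt_0_general {Ω : Type*} {m0 : MeasurableSpace Ω} (μ : Measure Ω) [IsFiniteMeasure μ]
    (𝒜 : ℕ → MeasurableSpace Ω)
    (Aμ : Set (Set Ω))
    (hAμ : Aμ = {A : Set Ω | MeasurableSet A ∧ ∃ As : ℕ → Set Ω,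
      (∀ n, MeasurableSet[𝒜 n] (As n)) ∧
      Tendsto (fun n => μ (symmDiff (As n) A)) atTop (𝓝 0)}) :
    (∅ ∈ Aμ) ∧ (∀ A ∈ Aμ, Aᶜ ∈ Aμ) ∧
      (∀ f : ℕ → Set Ω, (∀ i, f i ∈ Aμ) → (⋃ i, f i) ∈ Aμ) := by
  subst hAμ
  refine ⟨⟨.empty, approximableBy_empty⟩,
    fun A ⟨hA, hAμ⟩ => ⟨hA.compl, ApproximableBy.compl hAμ⟩, fun f hf => ?_⟩
  choose hfm hfμ using hf
  exact ⟨.iUnion hfm, ApproximableBy.iUnion hfm hfμ⟩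

theorem stmt_0 {Ω : Type*} {m0 : MeasurableSpace Ω} (μ : Measure Ω) [IsFiniteMeasure μ]
    (𝒜 : ℕ → MeasurableSpace Ω) (h𝒜 : ∀ n, 𝒜 n ≤ m0)
    (Aμ : Set (Set Ω))
    (hAμ : Aμ = {A : Set Ω | MeasurableSet A ∧ ∃ As : ℕ → Set Ω,
      (∀ n, MeasurableSet[𝒜 n] (As n)) ∧
      Tendsto (fun n => μ (symmDiff (As n) A)) atTop (𝓝 0)}) :
    (∅ ∈ Aμ) ∧ (∀ A ∈ Aμ, Aᶜ ∈ Aμ) ∧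
      (∀ f : ℕ → Set Ω, (∀ i, f i ∈ Aμ) → (⋃ i, f i) ∈ Aμ) :=
  stmt_0_general (m0 := m0) μ 𝒜 Aμ hAμ
end

section
/- Let φ be a Young function and (Ω, 𝒜, μ) a finite measure space. For measurable sets Aₙ, D ⊆ Ω, μ(Aₙ Δ D) → 0 if and only if the sequence of functions χ_{Aₙ} − χ_D converges to 0 in the Orlicz space L^φ(μ) (with respect to the Luxemburg norm N_φ). -/
open MeasureTheory Filter Topology

/-- A Young function: even, continuous, convex, vanishing exactly at 0, superlinear. -/
def IsYoung (φ : ℝ → ℝ) : Prop :=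
  ConvexOn ℝ Set.univ φ ∧ Continuous φ ∧ (∀ x, φ (-x) = φ x) ∧
    (∀ x, φ x = 0 ↔ x = 0) ∧ Tendsto (fun x => φ x / x) atTop atTop

/-- The Luxemburg norm. -/
noncomputable def luxNorm {Ω : Type*} [MeasurableSpace Ω] (μ : Measure Ω)
    (φ : ℝ → ℝ) (f : Ω → ℝ) : ℝ :=
  sInf {k : ℝ | 0 < k ∧ ∫ x, φ (|f x| / k) ∂μ ≤ 1}

section Aux

variable {φ : ℝ → ℝ}

lemma young_zero (hφ : IsYoung φ) : φ 0 = 0 := (hφ.2.2.2.1 0).mpr rfl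

lemma young_nonneg (hφ : IsYoung φ) (x : ℝ) : 0 ≤ φ x := by
  have h := hφ.1.2 (Set.mem_univ x) (Set.mem_univ (-x))
    (by norm_num : (0:ℝ) ≤ 1/2) (by norm_num : (0:ℝ) ≤ 1/2) (by norm_num)
  have he := hφ.2.2.1 x
  have h0 : (1/2 : ℝ) • x + (1/2 : ℝ) • (-x) = 0 := by
    rw [smul_eq_mul, smul_eq_mul]; ring
  rw [h0, young_zero hφ, smul_eq_mul, smul_eq_mul, he] at h
  linarith

lemma young_pos (hφ : IsYoung φ) {x : ℝ} (hx : x ≠ 0) : 0 < φ x :=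
  lt_of_le_of_ne (young_nonneg hφ x) fun h => hx ((hφ.2.2.2.1 x).mp h.symm)

lemma young_mono (hφ : IsYoung φ) {a b : ℝ} (ha : 0 ≤ a) (hab : a ≤ b) : φ a ≤ φ b := by
  rcases eq_or_lt_of_le (ha.trans hab) with hb | hb
  · have : a = 0 := le_antisymm (hab.trans hb.symm.le) ha
    rw [this, ← hb]
  · have h := hφ.1.2 (Set.mem_univ b) (Set.mem_univ (0:ℝ))
      (show (0:ℝ) ≤ a/b from div_nonneg ha hb.le)
      (show (0:ℝ) ≤ 1 - a/b from by
        have : a / b ≤ 1 := (div_le_one hb).mpr hab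
        linarith)
      (show a/b + (1 - a/b) = 1 from by ring)
    rw [smul_eq_mul, smul_eq_mul, smul_eq_mul, smul_eq_mul, mul_zero, add_zero,
      div_mul_cancel₀ _ hb.ne', young_zero hφ, mul_zero, add_zero] at h
    have h1 : a / b ≤ 1 := (div_le_one hb).mpr hab
    nlinarith [young_nonneg hφ b]

lemma young_exists_big (hφ : IsYoung φ) (M : ℝ) : ∃ c : ℝ, 0 < c ∧ M < φ c := by
  have h := hφ.2.2.2.2
  have h2 := (h.eventually_gt_atTop M).and (eventually_ge_atTop (1:ℝ))
  obtain ⟨c, hc1, hc2⟩ := h2.exists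
  refine ⟨c, by linarith, lt_of_lt_of_le hc1 ?_⟩
  exact div_le_self (young_nonneg hφ c) hc2

/-- The set in the Luxemburg norm (constant case) is nonempty. -/
lemma young_set_nonempty (hφ : IsYoung φ) {m : ℝ} (hm : 0 ≤ m) :
    {k : ℝ | 0 < k ∧ m * φ (1/k) ≤ 1}.Nonempty := by
  have hcont : Tendsto (fun k : ℝ => φ (1/k)) atTop (𝓝 0) := by
    have h1 : Tendsto (fun k : ℝ => 1/k) atTop (𝓝 0) := by
      simpa [one_div] using (tendsto_inv_atTop_zero : Tendsto (fun r : ℝ => r⁻¹) atTop (𝓝 0))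
    have h2 : Tendsto φ (𝓝 0) (𝓝 0) := by
      simpa [young_zero hφ] using hφ.2.1.tendsto 0
    exact h2.comp h1
  have h3 : ∀ᶠ k : ℝ in atTop, φ (1/k) < 1/(m+1) := by
    have : (0:ℝ) < 1/(m+1) := by positivity
    exact hcont.eventually (gt_mem_nhds this)
  obtain ⟨k, hk1, hk2⟩ := (h3.and (eventually_gt_atTop (0:ℝ))).exists
  refine ⟨k, hk2, ?_⟩
  have : m * φ (1/k) ≤ m * (1/(m+1)) :=
    mul_le_mul_of_nonneg_left hk1.le hm
  have h4 : m * (1/(m+1)) ≤ 1 := by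
    rw [mul_one_div, div_le_one (by positivity)]; linarith
  linarith

/-- Key equivalence for sequences of nonnegative reals. -/
lemma young_key (hφ : IsYoung φ) (m : ℕ → ℝ) (hm : ∀ n, 0 ≤ m n) :
    Tendsto m atTop (𝓝 0) ↔
      Tendsto (fun n => sInf {k : ℝ | 0 < k ∧ m n * φ (1/k) ≤ 1}) atTop (𝓝 0) := by
  have hbdd : ∀ n, BddBelow {k : ℝ | 0 < k ∧ m n * φ (1/k) ≤ 1} :=
    fun n => ⟨0, fun k hk => hk.1.le⟩
  have hnonneg : ∀ n, 0 ≤ sInf {k : ℝ | 0 < k ∧ m n * φ (1/k) ≤ 1} :=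
    fun n => Real.sInf_nonneg (fun k hk => hk.1.le)
  constructor
  · intro h
    rw [Metric.tendsto_atTop] at h ⊢
    intro ε hε
    have hφε : 0 < φ (1/(ε/2)) := young_pos hφ (by positivity)
    obtain ⟨N, hN⟩ := h (1/φ (1/(ε/2))) (by positivity)
    refine ⟨N, fun n hn => ?_⟩
    have hmn := hN n hn
    rw [Real.dist_eq, sub_zero, abs_of_nonneg (hm n)] at hmn
    have hmem : (ε/2) ∈ {k : ℝ | 0 < k ∧ m n * φ (1/k) ≤ 1} := by
      refine ⟨by positivity, ?_⟩
      have : m n * φ (1/(ε/2)) < (1/φ (1/(ε/2))) * φ (1/(ε/2)) :=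
        mul_lt_mul_of_pos_right hmn hφε
      rw [one_div_mul_cancel hφε.ne'] at this
      linarith
    have := csInf_le (hbdd n) hmem
    rw [Real.dist_eq, sub_zero, abs_of_nonneg (hnonneg n)]
    linarith
  · intro h
    rw [Metric.tendsto_atTop] at h ⊢
    intro ε hε
    obtain ⟨c, hc, hcM⟩ := young_exists_big hφ (1/ε)
    obtain ⟨N, hN⟩ := h (1/c) (by positivity)
    refine ⟨N, fun n hn => ?_⟩
    have hLn := hN n hn
    rw [Real.dist_eq, sub_zero, abs_of_nonneg (hnonneg n)] at hLn
    rw [Real.dist_eq, sub_zero, abs_of_nonneg (hm n)]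
    by_contra hcon
    push_neg at hcon
    have hlb : (1/c) ≤ sInf {k : ℝ | 0 < k ∧ m n * φ (1/k) ≤ 1} := by
      refine le_csInf (young_set_nonempty hφ (hm n)) (fun k hk => ?_)
      obtain ⟨hk0, hk1⟩ := hk
      -- from m n * φ(1/k) ≤ 1 and m n ≥ ε: φ(1/k) ≤ 1/ε < φ c, so 1/k < c
      by_contra hkc
      push_neg at hkc   -- k < 1/c, i.e. 1/k > c
      have h1k : c < 1/k := by
        rw [lt_div_iff₀ hk0]
        calc c * k < c * (1/c) := by exact mul_lt_mul_of_pos_left hkc hc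
        _ = 1 := by field_simp
      have hge : φ c ≤ φ (1/k) := young_mono hφ hc.le h1k.le
      have hpk : 0 < φ (1/k) := lt_of_lt_of_le (lt_of_le_of_lt (by positivity) hcM) hge
      have step1 : 1 < φ (1/k) * ε := by
        have := mul_lt_mul_of_pos_right (lt_of_lt_of_le hcM hge) hε
        rwa [one_div_mul_cancel hε.ne'] at this
      have step2 : φ (1/k) * ε ≤ φ (1/k) * m n := mul_le_mul_of_nonneg_left hcon hpk.le
      have := mul_comm (φ (1/k)) (m n)
      linarith
    linarith

end Aux

theorem stmt_3 {Ω : Type*} [MeasurableSpace Ω] (μ : Measure Ω) [IsFiniteMeasure μ]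
    (φ : ℝ → ℝ) (hφ : IsYoung φ)
    (A : ℕ → Set Ω) (hA : ∀ n, MeasurableSet (A n))
    (D : Set Ω) (hD : MeasurableSet D) :
    Tendsto (fun n => μ (symmDiff (A n) D)) atTop (𝓝 0) ↔
    Tendsto (fun n => luxNorm μ φ
        (fun x => (A n).indicator (fun _ => (1:ℝ)) x - D.indicator (fun _ => (1:ℝ)) x))
      atTop (𝓝 0) := by
  set m : ℕ → ℝ := fun n => (μ (symmDiff (A n) D)).toReal with hm_def
  have hm : ∀ n, 0 ≤ m n := fun n => ENNReal.toReal_nonneg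
  have hfin : ∀ n, μ (symmDiff (A n) D) ≠ ⊤ := fun n => measure_ne_top μ _
  have hlux : ∀ n, luxNorm μ φ
      (fun x => (A n).indicator (fun _ => (1:ℝ)) x - D.indicator (fun _ => (1:ℝ)) x)
      = sInf {k : ℝ | 0 < k ∧ m n * φ (1/k) ≤ 1} := by
    intro n
    unfold luxNorm
    congr 1
    ext k
    refine and_congr_right fun hk => ?_
    have heq : (fun x => φ (|(A n).indicator (fun _ => (1:ℝ)) x
        - D.indicator (fun _ => (1:ℝ)) x| / k))
        = (symmDiff (A n) D).indicator (fun _ => φ (1/k)) := by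
      funext x
      by_cases h1 : x ∈ A n <;> by_cases h2 : x ∈ D <;>
        simp [Set.indicator, Set.mem_symmDiff, h1, h2, young_zero hφ, abs_neg]
    rw [heq, integral_indicator_const _ ((hA n).symmDiff hD), smul_eq_mul]
    exact Iff.rfl
  rw [funext hlux, ← young_key hφ m hm]
  rw [← ENNReal.tendsto_toReal_iff hfin ENNReal.zero_ne_top]
  simp [hm_def]
end
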